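/- Let $1 \le q \le 2 \le p < \infty$. Then every block sequence $(f_j)$ of the biparameter Haar system in $H^p(H^q)$ satisfies the lower $p$-estimate with constant $1$: $\|\sum_{j=1}^n f_j\|_{H^p(H^q)} \ge (\sum_{j=1}^n \|f_j\|_{H^p(H^q)}^p)^{1/p}$. -/

import Mathlib

open Finset MeasureTheory

/-- The `L^∞`-normalized Haar function on the dyadic interval `[k/2^n, (k+1)/2^n)`. -/
noncomputable def haar (n k : ℕ) (x : ℝ) : ℝ :=
  if (k : ℝ) / 2 ^ n ≤ x ∧ x < ((k : ℝ) + 1 / 2) / 2 ^ n then 1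
  else if ((k : ℝ) + 1 / 2) / 2 ^ n ≤ x ∧ x < ((k : ℝ) + 1) / 2 ^ n then -1
  else 0

/-- The biparameter Haar function `h_{I,J}(x,y) = h_I(x) h_J(y)`. -/
noncomputable def haar2 (I J : ℕ × ℕ) (x y : ℝ) : ℝ := haar I.1 I.2 x * haar J.1 J.2 y

/-- The `H^p(H^q)` (mixed-norm Hardy space) norm of the finite linear combination
`∑_{IJ ∈ s} a IJ • h_{IJ}` of biparameter Haar functions, given by the square function formula
`(∫₀¹ (∫₀¹ (∑_{IJ ∈ s} a_{IJ}² h_{IJ}²(x,y))^{q/2} dy)^{p/q} dx)^{1/p}`. -/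
noncomputable def HpHqNorm (p q : ℝ) (s : Finset ((ℕ × ℕ) × (ℕ × ℕ)))
    (a : (ℕ × ℕ) × (ℕ × ℕ) → ℝ) : ℝ :=
  (∫ x in Set.Icc (0 : ℝ) 1,
      (∫ y in Set.Icc (0 : ℝ) 1,
        (∑ IJ ∈ s, (a IJ * haar2 IJ.1 IJ.2 x y) ^ 2) ^ (q / 2)) ^ (p / q)) ^ (1 / p)

lemma measurable_haar (n k : ℕ) : Measurable (haar n k) := by
  unfold haar
  exact Measurable.ite measurableSet_Ico measurable_const
    (Measurable.ite measurableSet_Ico measurable_const measurable_const)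

lemma abs_haar_le_one (n k : ℕ) (x : ℝ) : |haar n k x| ≤ 1 := by
  unfold haar; split_ifs <;> norm_num

lemma measurable_rpow_const' {c : ℝ} (hc : 0 ≤ c) : Measurable (fun x : ℝ => x ^ c) :=
  (continuous_iff_continuousAt.mpr fun x => Real.continuousAt_rpow_const x c (Or.inr hc)).measurable

lemma real_add_rpow_le {a b r : ℝ} (ha : 0 ≤ a) (hb : 0 ≤ b) (hr : 1 ≤ r) :
    a ^ r + b ^ r ≤ (a + b) ^ r := by
  lift a to NNReal using ha
  lift b to NNReal using hb
  exact_mod_cast NNReal.add_rpow_le_rpow_add a b hr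

lemma sum_rpow_le_rpow_sum' {ι : Type*} (t : Finset ι) (f : ι → ℝ) (hf : ∀ i ∈ t, 0 ≤ f i)
    {r : ℝ} (hr : 1 ≤ r) : ∑ i ∈ t, f i ^ r ≤ (∑ i ∈ t, f i) ^ r := by
  induction t using Finset.cons_induction with
  | empty => simp [Real.zero_rpow (by linarith : r ≠ 0)]
  | cons a t ha ih =>
    rw [Finset.sum_cons, Finset.sum_cons]
    have h1 : ∑ i ∈ t, f i ^ r ≤ (∑ i ∈ t, f i) ^ r :=
      ih fun i hi => hf i (Finset.mem_cons_of_mem hi)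
    calc f a ^ r + ∑ i ∈ t, f i ^ r ≤ f a ^ r + (∑ i ∈ t, f i) ^ r := by linarith
      _ ≤ (f a + ∑ i ∈ t, f i) ^ r :=
        real_add_rpow_le (hf a (Finset.mem_cons_self a t))
          (Finset.sum_nonneg fun i hi => hf i (Finset.mem_cons_of_mem hi)) hr

/-- Minkowski's integral inequality for finite families, via the `PiLp` norm. -/
lemma minkowski_sum_integral {α : Type*} [MeasurableSpace α] (μ : Measure α) [IsFiniteMeasure μ]
    {n : ℕ} {r : ℝ} (hr : 1 ≤ r) (u : Fin n → α → ℝ) (C : ℝ)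
    (hmeas : ∀ j, Measurable (u j)) (hnn : ∀ j y, 0 ≤ u j y) (hbd : ∀ j y, u j y ≤ C) :
    (∑ j, (∫ y, u j y ∂μ) ^ r) ^ (1 / r) ≤ ∫ y, (∑ j, u j y ^ r) ^ (1 / r) ∂μ := by
  have hr0 : (0:ℝ) < r := lt_of_lt_of_le one_pos hr
  haveI : Fact (1 ≤ ENNReal.ofReal r) := ⟨by rwa [ENNReal.one_le_ofReal]⟩
  set pr : ENNReal := ENNReal.ofReal r with hpr
  have hprr : pr.toReal = r := ENNReal.toReal_ofReal hr0.le
  let e := PiLp.continuousLinearEquiv pr ℝ (fun _ : Fin n => ℝ)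
  let U : α → PiLp pr (fun _ : Fin n => ℝ) := fun y => e.symm (fun j => u j y)
  have hUapp : ∀ y j, U y j = u j y := fun y j => rfl
  have hUnorm : ∀ y, ‖U y‖ = (∑ j, u j y ^ r) ^ (1 / r) := by
    intro y
    rw [PiLp.norm_eq_sum (by rw [hprr]; exact hr0)]
    simp only [hprr, hUapp, Real.norm_eq_abs, abs_of_nonneg (hnn _ y)]
  have hUsm : StronglyMeasurable U := by
    have hV : Measurable (fun y => (fun j => u j y : Fin n → ℝ)) :=
      measurable_pi_lambda _ fun j => hmeas j
    exact e.symm.continuous.comp_stronglyMeasurable hV.stronglyMeasurable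
  have hUint : Integrable U μ := by
    refine Integrable.mono' (integrable_const (((n : ℝ) * C ^ r) ^ (1 / r)))
      hUsm.aestronglyMeasurable ?_
    filter_upwards with y
    rw [hUnorm y]
    refine Real.rpow_le_rpow (Finset.sum_nonneg fun j _ => Real.rpow_nonneg (hnn j y) r) ?_
      (by positivity)
    calc ∑ j, u j y ^ r ≤ ∑ _j : Fin n, C ^ r :=
          Finset.sum_le_sum fun j _ => Real.rpow_le_rpow (hnn j y) (hbd j y) hr0.le
      _ = (n : ℝ) * C ^ r := by simp [mul_comm]
  have hcomp : ∀ j, (∫ y, U y ∂μ) j = ∫ y, u j y ∂μ := by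
    intro j
    have := (PiLp.proj (𝕜 := ℝ) pr (fun _ : Fin n => ℝ) j).integral_comp_comm hUint
    simpa [hUapp] using this.symm
  have key : ‖∫ y, U y ∂μ‖ ≤ ∫ y, ‖U y‖ ∂μ := norm_integral_le_integral_norm U
  rw [PiLp.norm_eq_sum (by rw [hprr]; exact hr0)] at key
  simp only [hprr, hcomp, Real.norm_eq_abs] at key
  calc (∑ j, (∫ y, u j y ∂μ) ^ r) ^ (1 / r)
      = (∑ j, |∫ y, u j y ∂μ| ^ r) ^ (1 / r) := by
        congr 1; refine Finset.sum_congr rfl fun j _ => ?_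
        rw [abs_of_nonneg (integral_nonneg (hnn j))]
    _ ≤ ∫ y, ‖U y‖ ∂μ := key
    _ = ∫ y, (∑ j, u j y ^ r) ^ (1 / r) ∂μ :=
        integral_congr_ae (Filter.Eventually.of_forall fun y => hUnorm y)

/-- The abstract lower `p`-estimate for the iterated square-function norms. -/
lemma main_estimate {α : Type*} [MeasurableSpace α] (μ : Measure α) [IsFiniteMeasure μ]
    (p q : ℝ) (hq1 : 1 ≤ q) (hq2 : q ≤ 2) (hp : 2 ≤ p)
    {n : ℕ} (F : Fin n → α → α → ℝ) (C0 : ℝ) (hC0 : 0 ≤ C0)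
    (hmeas : ∀ j, Measurable (fun z : α × α => F j z.1 z.2))
    (hnn : ∀ j x y, 0 ≤ F j x y)
    (hbd : ∀ x y, ∑ j, F j x y ≤ C0) :
    (∑ j, ((∫ x, (∫ y, F j x y ^ (q/2) ∂μ) ^ (p/q) ∂μ) ^ (1/p)) ^ p) ^ (1/p)
      ≤ (∫ x, (∫ y, (∑ j, F j x y) ^ (q/2) ∂μ) ^ (p/q) ∂μ) ^ (1/p) := by
  have hq0 : (0:ℝ) < q := lt_of_lt_of_le one_pos hq1
  have hqne : q ≠ 0 := hq0.ne'
  have hp0 : (0:ℝ) < p := by linarith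
  have hq2' : (0:ℝ) ≤ q / 2 := by positivity
  have hpq : (0:ℝ) ≤ p / q := by positivity
  have hp2 : (1:ℝ) ≤ p / 2 := by linarith
  have hFbd : ∀ j x y, F j x y ≤ C0 := fun j x y =>
    le_trans (Finset.single_le_sum (fun i _ => hnn i x y) (Finset.mem_univ j)) (hbd x y)
  have hSnn : ∀ x y, 0 ≤ ∑ j, F j x y := fun x y => Finset.sum_nonneg fun j _ => hnn j x y
  have hSmeas : Measurable (fun z : α × α => ∑ j, F j z.1 z.2) :=
    Finset.measurable_sum _ fun j _ => hmeas j
  have hinner_meas : ∀ j x, Measurable fun y => F j x y ^ (q/2) := fun j x =>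
    (measurable_rpow_const' hq2').comp ((hmeas j).comp (measurable_const.prodMk measurable_id))
  have hSinner_meas : ∀ x, Measurable fun y => (∑ j, F j x y) ^ (q/2) := fun x =>
    (measurable_rpow_const' hq2').comp (hSmeas.comp (measurable_const.prodMk measurable_id))
  have hinner_int : ∀ j x, Integrable (fun y => F j x y ^ (q/2)) μ := by
    intro j x
    refine Integrable.mono' (integrable_const (C0 ^ (q/2)))
      (hinner_meas j x).aestronglyMeasurable ?_
    filter_upwards with y
    rw [Real.norm_eq_abs, abs_of_nonneg (Real.rpow_nonneg (hnn j x y) _)]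
    exact Real.rpow_le_rpow (hnn j x y) (hFbd j x y) hq2'
  have hSinner_int : ∀ x, Integrable (fun y => (∑ j, F j x y) ^ (q/2)) μ := by
    intro x
    refine Integrable.mono' (integrable_const (C0 ^ (q/2)))
      (hSinner_meas x).aestronglyMeasurable ?_
    filter_upwards with y
    rw [Real.norm_eq_abs, abs_of_nonneg (Real.rpow_nonneg (hSnn x y) _)]
    exact Real.rpow_le_rpow (hSnn x y) (hbd x y) hq2'
  have hgnn : ∀ j x, 0 ≤ ∫ y, F j x y ^ (q/2) ∂μ := fun j x =>
    integral_nonneg fun y => Real.rpow_nonneg (hnn j x y) _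
  have hGnn : ∀ x, 0 ≤ ∫ y, (∑ j, F j x y) ^ (q/2) ∂μ := fun x =>
    integral_nonneg fun y => Real.rpow_nonneg (hSnn x y) _
  set B : ℝ := C0 ^ (q/2) * (μ Set.univ).toReal with hB
  have hgb : ∀ j x, ∫ y, F j x y ^ (q/2) ∂μ ≤ B := by
    intro j x
    have h := integral_mono (hinner_int j x) (integrable_const (C0 ^ (q/2)))
      (fun y => Real.rpow_le_rpow (hnn j x y) (hFbd j x y) hq2')
    rw [integral_const, smul_eq_mul] at h
    exact h.trans_eq (mul_comm _ _)
  have hGb : ∀ x, ∫ y, (∑ j, F j x y) ^ (q/2) ∂μ ≤ B := by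
    intro x
    have h := integral_mono (hSinner_int x) (integrable_const (C0 ^ (q/2)))
      (fun y => Real.rpow_le_rpow (hSnn x y) (hbd x y) hq2')
    rw [integral_const, smul_eq_mul] at h
    exact h.trans_eq (mul_comm _ _)
  -- Step A : reverse Minkowski via the vector-valued triangle inequality
  have hq2q : (1:ℝ) ≤ 2 / q := (one_le_div hq0).mpr hq2
  have hqq1 : q / 2 * (2 / q) = 1 := by field_simp
  have stepA : ∀ x, (∑ j, (∫ y, F j x y ^ (q/2) ∂μ) ^ (2/q)) ^ (q/2)
      ≤ ∫ y, (∑ j, F j x y) ^ (q/2) ∂μ := by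
    intro x
    have hM := minkowski_sum_integral μ hq2q (fun j y => F j x y ^ (q/2)) (C0 ^ (q/2))
      (fun j => hinner_meas j x) (fun j y => Real.rpow_nonneg (hnn j x y) _)
      (fun j y => Real.rpow_le_rpow (hnn j x y) (hFbd j x y) hq2')
    rw [one_div_div] at hM
    refine le_trans hM (le_of_eq ?_)
    refine integral_congr_ae (Filter.Eventually.of_forall fun y => ?_)
    have hrw : (∑ j, (F j x y ^ (q/2)) ^ (2/q)) = ∑ j, F j x y :=
      Finset.sum_congr rfl fun j _ => by
        rw [← Real.rpow_mul (hnn j x y), hqq1, Real.rpow_one]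
    show (∑ j, (F j x y ^ (q/2)) ^ (2/q)) ^ (q/2) = (∑ j, F j x y) ^ (q/2)
    rw [hrw]
  -- Step B : superadditivity of `t ^ (p/2)`
  have hqp1 : q / 2 * (p / q) = p / 2 := by field_simp
  have hqp2 : 2 / q * (p / 2) = p / q := by field_simp
  have stepB : ∀ x, ∑ j, (∫ y, F j x y ^ (q/2) ∂μ) ^ (p/q)
      ≤ (∫ y, (∑ j, F j x y) ^ (q/2) ∂μ) ^ (p/q) := by
    intro x
    have hsnn : 0 ≤ ∑ j, (∫ y, F j x y ^ (q/2) ∂μ) ^ (2/q) :=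
      Finset.sum_nonneg fun j _ => Real.rpow_nonneg (hgnn j x) _
    have h1 : ((∑ j, (∫ y, F j x y ^ (q/2) ∂μ) ^ (2/q)) ^ (q/2)) ^ (p/q)
        ≤ (∫ y, (∑ j, F j x y) ^ (q/2) ∂μ) ^ (p/q) :=
      Real.rpow_le_rpow (Real.rpow_nonneg hsnn _) (stepA x) hpq
    rw [← Real.rpow_mul hsnn, hqp1] at h1
    refine le_trans ?_ h1
    calc ∑ j, (∫ y, F j x y ^ (q/2) ∂μ) ^ (p/q)
        = ∑ j, ((∫ y, F j x y ^ (q/2) ∂μ) ^ (2/q)) ^ (p/2) := by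
          refine Finset.sum_congr rfl fun j _ => ?_
          rw [← Real.rpow_mul (hgnn j x), hqp2]
      _ ≤ _ := sum_rpow_le_rpow_sum' _ _ (fun j _ => Real.rpow_nonneg (hgnn j x) _) hp2
  -- outer measurability and integrability
  have hgsm : ∀ j, StronglyMeasurable (fun x => ∫ y, F j x y ^ (q/2) ∂μ) := by
    intro j
    have h : StronglyMeasurable (Function.uncurry fun x y => F j x y ^ (q/2)) :=
      ((measurable_rpow_const' hq2').comp (hmeas j)).stronglyMeasurable
    exact h.integral_prod_right
  have hGsm : StronglyMeasurable (fun x => ∫ y, (∑ j, F j x y) ^ (q/2) ∂μ) := by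
    have h : StronglyMeasurable (Function.uncurry fun x y => (∑ j, F j x y) ^ (q/2)) :=
      ((measurable_rpow_const' hq2').comp hSmeas).stronglyMeasurable
    exact h.integral_prod_right
  have hout_g : ∀ j, Integrable (fun x => (∫ y, F j x y ^ (q/2) ∂μ) ^ (p/q)) μ := by
    intro j
    refine Integrable.mono' (integrable_const (B ^ (p/q)))
      (((measurable_rpow_const' hpq).comp (hgsm j).measurable).aestronglyMeasurable) ?_
    filter_upwards with x
    rw [Real.norm_eq_abs, abs_of_nonneg (Real.rpow_nonneg (hgnn j x) _)]
    exact Real.rpow_le_rpow (hgnn j x) (hgb j x) hpq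
  have hout_G : Integrable (fun x => (∫ y, (∑ j, F j x y) ^ (q/2) ∂μ) ^ (p/q)) μ := by
    refine Integrable.mono' (integrable_const (B ^ (p/q)))
      (((measurable_rpow_const' hpq).comp hGsm.measurable).aestronglyMeasurable) ?_
    filter_upwards with x
    rw [Real.norm_eq_abs, abs_of_nonneg (Real.rpow_nonneg (hGnn x) _)]
    exact Real.rpow_le_rpow (hGnn x) (hGb x) hpq
  have stepC : ∑ j, ∫ x, (∫ y, F j x y ^ (q/2) ∂μ) ^ (p/q) ∂μ
      ≤ ∫ x, (∫ y, (∑ j, F j x y) ^ (q/2) ∂μ) ^ (p/q) ∂μ := by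
    rw [← integral_finset_sum Finset.univ fun j _ => hout_g j]
    exact integral_mono (integrable_finset_sum _ fun j _ => hout_g j) hout_G stepB
  have hre : ∀ j, ((∫ x, (∫ y, F j x y ^ (q/2) ∂μ) ^ (p/q) ∂μ) ^ (1/p)) ^ p
      = ∫ x, (∫ y, F j x y ^ (q/2) ∂μ) ^ (p/q) ∂μ := by
    intro j
    have hnn' : 0 ≤ ∫ x, (∫ y, F j x y ^ (q/2) ∂μ) ^ (p/q) ∂μ :=
      integral_nonneg fun x => Real.rpow_nonneg (hgnn j x) _
    rw [← Real.rpow_mul hnn', one_div_mul_cancel hp0.ne', Real.rpow_one]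
  simp only [hre]
  exact Real.rpow_le_rpow (Finset.sum_nonneg fun j _ =>
    integral_nonneg fun x => Real.rpow_nonneg (hgnn j x) _) stepC (by positivity)

set_option maxHeartbeats 1600000 in
/-- Lower `p`-estimate with constant 1 for block sequences (disjoint Haar spectra)
in `H^p(H^q)`, `1 ≤ q ≤ 2 ≤ p < ∞`. -/
theorem lower_p_estimate_HpHq_of_q_le_two_le_p (p q : ℝ) (hq1 : 1 ≤ q) (hq2 : q ≤ 2)
    (hp : 2 ≤ p)
    (n : ℕ) (s : Fin n → Finset ((ℕ × ℕ) × (ℕ × ℕ)))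
    (a : Fin n → (ℕ × ℕ) × (ℕ × ℕ) → ℝ)
    (hdisj : ∀ i j, i ≠ j → Disjoint (s i) (s j))
    (hnonzero : ∀ j, ∃ IJ ∈ s j, a j IJ ≠ 0) :
    (∑ j, HpHqNorm p q (s j) (a j) ^ p) ^ (1 / p)
      ≤ HpHqNorm p q (Finset.univ.biUnion s)
          (fun IJ => ∑ j, if IJ ∈ s j then a j IJ else 0) := by
  haveI : Fact ((volume : Measure ℝ) (Set.Icc (0:ℝ) 1) < ⊤) :=
    ⟨by rw [Real.volume_Icc]; exact ENNReal.ofReal_lt_top⟩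
  have hsum : ∀ x y : ℝ,
      (∑ IJ ∈ Finset.univ.biUnion s,
          ((∑ j, if IJ ∈ s j then a j IJ else 0) * haar2 IJ.1 IJ.2 x y) ^ 2)
        = ∑ j, ∑ IJ ∈ s j, (a j IJ * haar2 IJ.1 IJ.2 x y) ^ 2 := by
    intro x y
    rw [Finset.sum_biUnion (fun i _ j _ hij => hdisj i j hij)]
    refine Finset.sum_congr rfl fun j _ => Finset.sum_congr rfl fun IJ hIJ => ?_
    have hco : (∑ i, if IJ ∈ s i then a i IJ else 0) = a j IJ := by
      rw [Finset.sum_eq_single j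
        (fun i _ hij => if_neg fun h => Finset.disjoint_left.mp (hdisj i j hij) h hIJ)
        (fun h => absurd (Finset.mem_univ j) h)]
      exact if_pos hIJ
    rw [hco]
  have hmeas : ∀ j,
      Measurable (fun z : ℝ × ℝ => ∑ IJ ∈ s j, (a j IJ * haar2 IJ.1 IJ.2 z.1 z.2) ^ 2) := by
    intro j
    refine Finset.measurable_sum _ fun IJ _ => ?_
    have h2 : Measurable (fun z : ℝ × ℝ => haar2 IJ.1 IJ.2 z.1 z.2) := by
      unfold haar2
      exact ((measurable_haar _ _).comp measurable_fst).mul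
        ((measurable_haar _ _).comp measurable_snd)
    exact (measurable_const.mul h2).pow_const 2
  have hnn : ∀ j (x y : ℝ), 0 ≤ ∑ IJ ∈ s j, (a j IJ * haar2 IJ.1 IJ.2 x y) ^ 2 :=
    fun j x y => Finset.sum_nonneg fun IJ _ => sq_nonneg _
  have hbd : ∀ x y : ℝ, (∑ j, ∑ IJ ∈ s j, (a j IJ * haar2 IJ.1 IJ.2 x y) ^ 2)
      ≤ ∑ j, ∑ IJ ∈ s j, (a j IJ) ^ 2 := by
    intro x y
    refine Finset.sum_le_sum fun j _ => Finset.sum_le_sum fun IJ _ => ?_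
    rw [mul_pow]
    refine mul_le_of_le_one_right (sq_nonneg _) ?_
    have h1 := abs_haar_le_one IJ.1.1 IJ.1.2 x
    have h2 := abs_haar_le_one IJ.2.1 IJ.2.2 y
    have habs : |haar2 IJ.1 IJ.2 x y| ≤ 1 := by
      rw [haar2, abs_mul]
      exact mul_le_one₀ h1 (abs_nonneg _) h2
    calc haar2 IJ.1 IJ.2 x y ^ 2 = |haar2 IJ.1 IJ.2 x y| ^ 2 := (sq_abs _).symm
      _ ≤ 1 ^ 2 := pow_le_pow_left₀ (abs_nonneg _) habs 2
      _ = 1 := one_pow 2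
  have hmain := main_estimate (volume.restrict (Set.Icc (0:ℝ) 1)) p q hq1 hq2 hp
    (fun j x y => ∑ IJ ∈ s j, (a j IJ * haar2 IJ.1 IJ.2 x y) ^ 2)
    (∑ j, ∑ IJ ∈ s j, (a j IJ) ^ 2)
    (Finset.sum_nonneg fun j _ => Finset.sum_nonneg fun IJ _ => sq_nonneg _)
    hmeas hnn hbd
  beta_reduce at hmain
  unfold HpHqNorm
  refine le_trans hmain (le_of_eq ?_)
  have hinner : ∀ x : ℝ, (∫ y in Set.Icc (0:ℝ) 1,
      (∑ j, ∑ IJ ∈ s j, (a j IJ * haar2 IJ.1 IJ.2 x y) ^ 2) ^ (q/2))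
      = ∫ y in Set.Icc (0:ℝ) 1,
      (∑ IJ ∈ Finset.univ.biUnion s,
        ((∑ j, if IJ ∈ s j then a j IJ else 0) * haar2 IJ.1 IJ.2 x y) ^ 2) ^ (q/2) := by
    intro x
    refine integral_congr_ae (Filter.Eventually.of_forall fun y => ?_)
    beta_reduce
    rw [hsum x y]
  have houter : (∫ x in Set.Icc (0:ℝ) 1, (∫ y in Set.Icc (0:ℝ) 1,
      (∑ j, ∑ IJ ∈ s j, (a j IJ * haar2 IJ.1 IJ.2 x y) ^ 2) ^ (q/2)) ^ (p/q))
      = ∫ x in Set.Icc (0:ℝ) 1, (∫ y in Set.Icc (0:ℝ) 1,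
      (∑ IJ ∈ Finset.univ.biUnion s,
        ((∑ j, if IJ ∈ s j then a j IJ else 0) * haar2 IJ.1 IJ.2 x y) ^ 2) ^ (q/2)) ^ (p/q) := by
    refine integral_congr_ae (Filter.Eventually.of_forall fun x => ?_)
    beta_reduce
    rw [hinner x]
  rw [houter]
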